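/- Let V₁, …, V_l be nonzero proper subspaces of ℂ^n satisfying V_{j+1} ∩ V_j^⊥ = {0} for all j = 1, …, l−1. Then for every s ≤ l, the kernel of the composition Π_{V_l}^⊥ ∘ ⋯ ∘ Π_{V_s}^⊥ equals V_s. -/

import Mathlib

/-
Peeling off the factors from the right: `Π_{V_s}^⊥` has kernel `V_s` and range `V_sᗮ`, and the
kernel `V_{s+1}` of the remaining product meets `V_sᗮ` only in `0`, so composing with it loses
nothing. At the last step the remaining product is the identity.
-/

noncomputable def projc {n : ℕ} (V : Submodule ℂ (EuclideanSpace ℂ (Fin n))) :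
    EuclideanSpace ℂ (Fin n) →L[ℂ] EuclideanSpace ℂ (Fin n) :=
  V.subtypeL.comp (Submodule.orthogonalProjection V)

/-- `Π_V^⊥ = 1 - Π_V`, the orthogonal projection onto `Vᗮ`. -/
noncomputable def projPerp {n : ℕ} (V : Submodule ℂ (EuclideanSpace ℂ (Fin n))) :
    EuclideanSpace ℂ (Fin n) →L[ℂ] EuclideanSpace ℂ (Fin n) :=
  1 - projc V

theorem LinearMap.ker_comp_eq_ker_of_disjoint {R M M₂ M₃ : Type*} [Semiring R]
    [AddCommMonoid M] [AddCommMonoid M₂] [AddCommMonoid M₃] [Module R M] [Module R M₂]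
    [Module R M₃] {f : M₂ →ₗ[R] M₃} {g : M →ₗ[R] M₂} (h : Disjoint (ker f) (range g)) :
    ker (f ∘ₗ g) = ker g := by
  ext x
  rw [mem_ker, mem_ker, comp_apply]
  exact ⟨fun hx => Submodule.disjoint_def.mp h _ hx (mem_range_self g x),
    fun hx => by rw [hx, map_zero]⟩

theorem List.prod_map_range_sub_eq_mul {M : Type*} [Monoid M] (f : ℕ → M) {l s : ℕ}
    (hs : s < l) :
    ((List.range (l - s)).map (fun i => f (l - 1 - i))).prod =
      ((List.range (l - (s + 1))).map (fun i => f (l - 1 - i))).prod * f s := by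
  obtain ⟨k, rfl⟩ := Nat.exists_eq_add_of_lt hs
  rw [show s + k + 1 - s = k + 1 by omega, show s + k + 1 - (s + 1) = k by omega,
    List.range_succ, List.map_append, List.prod_append, List.map_singleton, List.prod_singleton,
    show s + k + 1 - 1 - k = s by omega]

section projPerp

variable {n : ℕ} (V : Submodule ℂ (EuclideanSpace ℂ (Fin n)))

theorem projPerp_eq_starProjection_orthogonal : projPerp V = Vᗮ.starProjection :=
  (Submodule.starProjection_orthogonal' V).symm

theorem ker_projPerp : LinearMap.ker (projPerp V).toLinearMap = V := by
  rw [projPerp_eq_starProjection_orthogonal]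
  exact (Vᗮ.ker_starProjection).trans V.orthogonal_orthogonal

theorem range_projPerp : LinearMap.range (projPerp V).toLinearMap = Vᗮ := by
  rw [projPerp_eq_starProjection_orthogonal]
  exact Vᗮ.range_starProjection

end projPerp

theorem ker_comp_projPerp_general {n l : ℕ} (V : ℕ → Submodule ℂ (EuclideanSpace ℂ (Fin n)))
    (hnonint : ∀ j, j + 1 < l → V (j + 1) ⊓ (V j)ᗮ = ⊥) :
    ∀ s, s < l →
      LinearMap.ker ((((List.range (l - s)).map (fun i => projPerp (V (l - 1 - i)))).prod :
          EuclideanSpace ℂ (Fin n) →L[ℂ] EuclideanSpace ℂ (Fin n)) :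
          EuclideanSpace ℂ (Fin n) →ₗ[ℂ] EuclideanSpace ℂ (Fin n))
        = V s := by
  intro s hs
  induction hs.le using Nat.decreasingInduction with
  | self => exact absurd hs (lt_irrefl l)
  | of_succ s hsl ih =>
    rw [List.prod_map_range_sub_eq_mul (fun j => projPerp (V j)) hsl, ContinuousLinearMap.mul_def,
      ContinuousLinearMap.toLinearMap_comp, LinearMap.ker_comp_eq_ker_of_disjoint, ker_projPerp]
    rw [range_projPerp]
    rcases Nat.lt_or_ge (s + 1) l with hsl' | hsl'
    · rw [ih hsl', disjoint_iff]
      exact hnonint s hsl'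
    · simp [show l - (s + 1) = 0 by omega, Module.End.one_eq_id]

/-- If `V 0, …, V (l-1)` are nonzero proper subspaces of `ℂ^n` with
`V (j+1) ⊓ (V j)ᗮ = ⊥`, then for every `s < l` the kernel of
`Π^⊥_{V (l-1)} ∘ ⋯ ∘ Π^⊥_{V s}` is `V s`. -/
theorem ker_comp_projPerp {n l : ℕ} (V : ℕ → Submodule ℂ (EuclideanSpace ℂ (Fin n)))
    (hbot : ∀ j, j < l → V j ≠ ⊥) (htop : ∀ j, j < l → V j ≠ ⊤)
    (hnonint : ∀ j, j + 1 < l → V (j + 1) ⊓ (V j)ᗮ = ⊥) :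
    ∀ s, s < l →
      LinearMap.ker ((((List.range (l - s)).map (fun i => projPerp (V (l - 1 - i)))).prod :
          EuclideanSpace ℂ (Fin n) →L[ℂ] EuclideanSpace ℂ (Fin n)) :
          EuclideanSpace ℂ (Fin n) →ₗ[ℂ] EuclideanSpace ℂ (Fin n))
        = V s :=
  ker_comp_projPerp_general V hnonint
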